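/- arXiv:2110.04928 — 3 statements merged into one kernel-verified Lean document; each statement's English description precedes it below -/
import Mathlib

section
/- Let k be an algebraically closed field of characteristic not 2 or 3, and let A, B ∈ k[t] be polynomials, not both zero, such that 4A³ + 27B² = 0 identically. Then there exist a polynomial G ∈ k[t] and constants a, b ∈ k with 4a³ + 27b² = 0 such that A = aG² and B = bG³. -/
theorem stmt_0 {k : Type*} [Field k] [IsAlgClosed k]
    (h2 : ringChar k ≠ 2) (h3 : ringChar k ≠ 3)
    (A B : Polynomial k) (hAB : ¬(A = 0 ∧ B = 0))
    (h : 4 * A ^ 3 + 27 * B ^ 2 = 0) :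
    ∃ (G : Polynomial k) (a b : k),
      4 * a ^ 3 + 27 * b ^ 2 = 0 ∧
      A = Polynomial.C a * G ^ 2 ∧ B = Polynomial.C b * G ^ 3 := by
  have hk2 : (2:k) ≠ 0 := by
    intro hc
    have hd := (ringChar.spec k 2).mp (by exact_mod_cast hc)
    rcases (Nat.dvd_prime Nat.prime_two).mp hd with h1 | h1
    · exact CharP.ringChar_ne_one h1
    · exact h2 h1
  have hk3 : (3:k) ≠ 0 := by
    intro hc
    have hd := (ringChar.spec k 3).mp (by exact_mod_cast hc)
    rcases (Nat.dvd_prime Nat.prime_three).mp hd with h1 | h1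
    · exact CharP.ringChar_ne_one h1
    · exact h3 h1
  have hk4 : (4:k) ≠ 0 := by
    have e : (4:k) = 2 * 2 := by norm_num
    rw [e]; exact mul_ne_zero hk2 hk2
  have hk27 : (27:k) ≠ 0 := by
    have e : (27:k) = 3 * 3 * 3 := by norm_num
    rw [e]; exact mul_ne_zero (mul_ne_zero hk3 hk3) hk3
  have hp4 : (4 : Polynomial k) = Polynomial.C 4 := by simp [map_ofNat]
  have hp27 : (27 : Polynomial k) = Polynomial.C 27 := by simp [map_ofNat]
  -- key form of the identity with explicit C's
  have hC : Polynomial.C (27:k) * B ^ 2 = Polynomial.C (-4 : k) * A ^ 3 := by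
    rw [← hp27]
    have : Polynomial.C (-4 : k) = (-4 : Polynomial k) := by simp [map_ofNat]
    rw [this]
    linear_combination h
  have hA : A ≠ 0 := by
    intro hA0
    apply hAB
    refine ⟨hA0, ?_⟩
    rw [hA0] at hC
    simp only [zero_pow, mul_zero, ne_eq, OfNat.ofNat_ne_zero, not_false_eq_true] at hC
    rcases mul_eq_zero.mp hC with h' | h'
    · exact absurd (Polynomial.C_eq_zero.mp h') hk27
    · exact pow_eq_zero_iff (two_ne_zero) |>.mp h'
  have hB : B ≠ 0 := by
    intro hB0
    apply hAB
    rw [hB0] at hC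
    simp only [zero_pow, mul_zero, ne_eq, OfNat.ofNat_ne_zero, not_false_eq_true] at hC
    rcases mul_eq_zero.mp hC.symm with h' | h'
    · exact absurd (Polynomial.C_eq_zero.mp h') (by intro hh; exact hk4 (by linear_combination -hh))
    · exact ⟨pow_eq_zero_iff (three_ne_zero) |>.mp h', hB0⟩
  have hB2 : B ^ 2 = Polynomial.C (-(4:k)/27) * A ^ 3 := by
    apply mul_left_cancel₀ (a := Polynomial.C (27:k)) (by simp [Polynomial.C_eq_zero, hk27])
    have e : (27:k) * (-(4:k)/27) = -4 := by field_simp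
    rw [hC, ← mul_assoc, ← Polynomial.C_mul, e]
  have hdvd : A ∣ B := by
    refine (IsIntegrallyClosed.pow_dvd_pow_iff two_ne_zero).mp ?_
    rw [hB2]
    exact Dvd.dvd.mul_left (pow_dvd_pow A (by norm_num)) _
  obtain ⟨G, hG⟩ := hdvd
  rw [hG] at hC
  have hcancel : Polynomial.C (27:k) * G ^ 2 = Polynomial.C (-4:k) * A := by
    apply mul_left_cancel₀ (pow_ne_zero 2 hA)
    linear_combination hC
  have hAfin : A = Polynomial.C (-27/4 : k) * G ^ 2 := by
    apply mul_left_cancel₀ (a := Polynomial.C (-4:k))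
      (by simp only [ne_eq, Polynomial.C_eq_zero]; intro hh; exact hk4 (by linear_combination -hh))
    have e2 : (-4:k) * (-27/4) = 27 := by field_simp
    rw [← mul_assoc, ← Polynomial.C_mul, e2]
    exact hcancel.symm
  refine ⟨G, -27/4, -27/4, ?_, hAfin, ?_⟩
  · field_simp
    ring_nf
  · rw [hG, hAfin]; ring
end

section
/- Let R = ℚ[a, c][z]/(z² + c). For an integer N, write the product P_N = ∏_{k=0}^{3} (4a + (4N − 2k)z) · ∏_{k=0}^{5} (6a + (6N − 2k)z) in R as q₀(a,c) + q₁(a,c)·z with q₀, q₁ ∈ ℚ[a,c]. Then for N = 2, the quotient ring ℚ[a, c]/(q₀, q₁), graded with deg a = 1 and deg c = 2, is a finite-dimensional ℚ-vector space of total dimension 45. -/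
open MvPolynomial

noncomputable section

/-- The variable `a`, of weighted degree 1. -/
def a : MvPolynomial (Fin 2) ℚ := X 0

/-- The variable `c`, of weighted degree 2. -/
def c : MvPolynomial (Fin 2) ℚ := X 1

/-- The ring `ℚ[a,c][z]`; the class `z` is `Polynomial.X`. -/
abbrev S : Type := Polynomial (MvPolynomial (Fin 2) ℚ)

/-- The ideal `(z² + c)`, so that `S ⧸ Irel` is `ℚ[a,c][z]/(z² + c)`. -/
def Irel : Ideal S := Ideal.span {Polynomial.X ^ 2 + Polynomial.C c}

/-- The product `∏_{k=0}^{3} (4a + (4N − 2k)z) · ∏_{k=0}^{5} (6a + (6N − 2k)z)`,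
computed in `ℚ[a,c][z]`. -/
def prodP (N : ℤ) : S :=
  (∏ k ∈ Finset.range 4,
    (Polynomial.C (4 * a) + Polynomial.C (C ((4 * N - 2 * (k : ℤ) : ℤ) : ℚ)) * Polynomial.X)) *
  (∏ k ∈ Finset.range 6,
    (Polynomial.C (6 * a) + Polynomial.C (C ((6 * N - 2 * (k : ℤ) : ℤ) : ℚ)) * Polynomial.X))

end

/-!
Reducing modulo `z² = -c` turns `P₂` into `36864 f + 73728 g z`, where `f` and `g` are
weighted-homogeneous of degrees 10 and 9, so the quotient is `ℚ[a,c]/(f, g)`.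

The 45 monomials `a^i c^j` with `i + 4j ≤ 16` span it: every other monomial is divisible by one of
`a¹⁷, a¹³c, a⁹c², a⁵c³, ac⁴, c⁵`, and each of these is congruent modulo `(f, g)` to a
combination of monomials of smaller `c`-exponent. They are independent by Macaulay duality: a
linear form `socle` supported in weighted degree 16 vanishes on `(f, g)`, and in each weighted
degree `d` the pairing `(x, y) ↦ socle (x * y)` between the standard monomials of degree `d` and
suitable monomials of degree `16 - d` is a leading principal Hankel matrix of the coefficients of
`socle`, which is nonsingular.
-/

section QuadraticExtension

variable {R : Type*} [CommRing R] {γ : R}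

theorem mk_linear_mul_mk_linear (p₀ p₁ q₀ q₁ : R) :
    Ideal.Quotient.mk (Ideal.span {Polynomial.X ^ 2 + Polynomial.C γ})
        (Polynomial.C p₀ + Polynomial.C p₁ * Polynomial.X) *
      Ideal.Quotient.mk (Ideal.span {Polynomial.X ^ 2 + Polynomial.C γ})
        (Polynomial.C q₀ + Polynomial.C q₁ * Polynomial.X) =
    Ideal.Quotient.mk (Ideal.span {Polynomial.X ^ 2 + Polynomial.C γ})
      (Polynomial.C (p₀ * q₀ - γ * p₁ * q₁) +
        Polynomial.C (p₀ * q₁ + p₁ * q₀) * Polynomial.X) := by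
  rw [← map_mul, Ideal.Quotient.eq, Ideal.mem_span_singleton']
  exact ⟨Polynomial.C (p₁ * q₁), by simp only [map_sub, map_mul, map_add]; ring⟩

theorem mk_linear_eq_mk_linear_iff [Nontrivial R] {p₀ p₁ q₀ q₁ : R} :
    Ideal.Quotient.mk (Ideal.span {Polynomial.X ^ 2 + Polynomial.C γ})
        (Polynomial.C p₀ + Polynomial.C p₁ * Polynomial.X) =
      Ideal.Quotient.mk (Ideal.span {Polynomial.X ^ 2 + Polynomial.C γ})
        (Polynomial.C q₀ + Polynomial.C q₁ * Polynomial.X) ↔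
    p₀ = q₀ ∧ p₁ = q₁ := by
  refine ⟨fun h => ?_, fun ⟨h₀, h₁⟩ => h₀ ▸ h₁ ▸ rfl⟩
  rw [Ideal.Quotient.eq, Ideal.mem_span_singleton] at h
  have hdiff : Polynomial.C p₀ + Polynomial.C p₁ * Polynomial.X
      - (Polynomial.C q₀ + Polynomial.C q₁ * Polynomial.X)
      = Polynomial.C (p₀ - q₀) + Polynomial.C (p₁ - q₁) * Polynomial.X := by
    simp only [map_sub]; ring
  rw [hdiff] at h
  have hzero : Polynomial.C (p₀ - q₀) + Polynomial.C (p₁ - q₁) * Polynomial.X = 0 := by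
    by_contra hne
    refine (Polynomial.monic_X_pow_add_C γ two_ne_zero).not_dvd_of_degree_lt hne ?_ h
    rw [Polynomial.degree_X_pow_add_C two_pos, add_comm]
    exact Polynomial.degree_linear_le.trans_lt (by norm_num)
  have h₀ : p₀ - q₀ = 0 := by simpa using congrArg (Polynomial.coeff · 0) hzero
  have h₁ : p₁ - q₁ = 0 := by simpa using congrArg (Polynomial.coeff · 1) hzero
  exact ⟨sub_eq_zero.mp h₀, sub_eq_zero.mp h₁⟩

end QuadraticExtension

theorem Ideal.Quotient.sum_smul_mk {K A ι : Type*} [CommSemiring K] [CommRing A] [Algebra K A]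
    (I : Ideal A) (s : Finset ι) (w : ι → K) (v : ι → A) :
    ∑ i ∈ s, w i • Ideal.Quotient.mk I (v i) =
      Ideal.Quotient.mk I (∑ i ∈ s, w i • v i) := by
  simp only [← Ideal.Quotient.mkₐ_eq_mk K, map_sum, map_smul]

theorem span_pair_unit_mul {R : Type*} [CommSemiring R] {u v : R} (hu : IsUnit u) (hv : IsUnit v)
    (x y : R) : Ideal.span {u * x, v * y} = Ideal.span {x, y} := by
  rw [Ideal.span_insert, Ideal.span_insert x, Ideal.span_singleton_mul_left_unit hu,
    Ideal.span_singleton_mul_left_unit hv]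

local notation "ℚ[a,c]" => MvPolynomial (Fin 2) ℚ

namespace EllipticChow

noncomputable def f : ℚ[a,c] :=
  324 * a ^ 10 - 20475 * a ^ 8 * c + 120382 * a ^ 6 * c ^ 2 - 133495 * a ^ 4 * c ^ 3
    + 27244 * a ^ 2 * c ^ 4 - 480 * c ^ 5

noncomputable def g : ℚ[a,c] :=
  1944 * a ^ 9 - 31095 * a ^ 7 * c + 77392 * a ^ 5 * c ^ 2 - 38005 * a ^ 3 * c ^ 3
    + 2764 * a * c ^ 4

theorem mk_prodP_two :
    Ideal.Quotient.mk Irel (prodP 2) = Ideal.Quotient.mk Irel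
      (Polynomial.C (36864 * f) + Polynomial.C (73728 * g) * Polynomial.X) := by
  have hone : Ideal.Quotient.mk Irel 1 =
      Ideal.Quotient.mk Irel (Polynomial.C 1 + Polynomial.C 0 * Polynomial.X) := by
    simp
  simp only [prodP, map_mul (Ideal.Quotient.mk Irel), Finset.prod_range_succ,
    Finset.prod_range_zero, hone]
  unfold Irel
  simp only [mk_linear_mul_mk_linear]
  refine congrArg _ (congrArg₂ (fun p q => Polynomial.C p + Polynomial.C q * Polynomial.X) ?_ ?_)
  · unfold f; push_cast [map_ofNat]; ring
  · unfold g; push_cast [map_ofNat]; ring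

theorem a_pow_mul_c_pow (p q : ℕ) :
    a ^ p * c ^ q = monomial (Finsupp.single 0 p + Finsupp.single 1 q) (1 : ℚ) := by
  rw [a, c, X_pow_eq_monomial, X_pow_eq_monomial, monomial_mul, one_mul]

theorem monomial_eq_C_mul_a_pow_mul_c_pow (e : Fin 2 →₀ ℕ) (r : ℚ) :
    monomial e r = C r * (a ^ e 0 * c ^ e 1) := by
  rw [monomial_eq, Finsupp.prod_fintype _ _ fun _ => pow_zero _, Fin.prod_univ_two, a, c]

theorem single_add_single_inj {p q p' q' : ℕ} :
    (Finsupp.single (0 : Fin 2) p + Finsupp.single 1 q =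
        Finsupp.single 0 p' + Finsupp.single 1 q') ↔
      p = p' ∧ q = q' := by
  simp [Finsupp.ext_iff, Fin.forall_fin_two]

/-- Up to scale, the only `ρ₀, …, ρ₈` satisfying the recurrences `∑ₖ fₖ ρ_{q+k} = 0` and
`∑ₖ gₖ ρ_{q+k} = 0` for `q ≤ 3`, where `fₖ`, `gₖ` are the coefficients of `f`, `g` in order of
increasing `c`-exponent. -/
def socleCoeff (q : ℕ) : ℚ :=
  [438555419396, 58754649276, 16401517956, 8290200636, 7289030916, 11291814396, 32898684276,
    212356969056, 5430036927411].getD q 0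

noncomputable def socle : ℚ[a,c] →ₗ[ℚ] ℚ :=
  ∑ q ∈ Finset.range 9,
    socleCoeff q • lcoeff ℚ (Finsupp.single 0 (16 - 2 * q) + Finsupp.single 1 q)

theorem socle_a_pow_mul_c_pow (p q : ℕ) :
    socle (a ^ p * c ^ q) = if p + 2 * q = 16 then socleCoeff q else 0 := by
  simp only [socle, LinearMap.sum_apply, LinearMap.smul_apply, lcoeff_apply,
    a_pow_mul_c_pow, coeff_monomial, single_add_single_inj, smul_eq_mul, mul_ite, mul_one, mul_zero]
  split_ifs with h
  · rw [Finset.sum_eq_single q (fun s _ hs => if_neg (by omega)) (fun hq => by simp at hq; omega),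
      if_pos (by omega)]
  · exact Finset.sum_eq_zero fun s hs => if_neg (by rw [Finset.mem_range] at hs; omega)

theorem socle_ofNat_mul (n : ℕ) [n.AtLeastTwo] (x : ℚ[a,c]) :
    socle ((no_index (OfNat.ofNat n) : ℚ[a,c]) * x) = OfNat.ofNat n * socle x := by
  rw [← map_ofNat (algebraMap ℚ ℚ[a,c]), ← Algebra.smul_def, map_smul, smul_eq_mul]

theorem socle_a_pow_mul_c_pow_mul_f (p q : ℕ) : socle (a ^ p * c ^ q * f) = 0 := by
  have hexp : a ^ p * c ^ q * f = 324 * (a ^ (p + 10) * c ^ q) - 20475 * (a ^ (p + 8) * c ^ (q + 1))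
      + 120382 * (a ^ (p + 6) * c ^ (q + 2)) - 133495 * (a ^ (p + 4) * c ^ (q + 3))
      + 27244 * (a ^ (p + 2) * c ^ (q + 4)) - 480 * (a ^ p * c ^ (q + 5)) := by
    unfold f; ring
  rw [hexp]
  simp only [map_add, map_sub, socle_ofNat_mul, socle_a_pow_mul_c_pow]
  -- every exponent condition reads `p + 2 * q = 6`
  split_ifs <;> try omega
  · have hq : q ≤ 3 := by omega
    interval_cases q <;> norm_num [socleCoeff]
  · simp

theorem socle_a_pow_mul_c_pow_mul_g (p q : ℕ) : socle (a ^ p * c ^ q * g) = 0 := by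
  have hexp : a ^ p * c ^ q * g = 1944 * (a ^ (p + 9) * c ^ q) - 31095 * (a ^ (p + 7) * c ^ (q + 1))
      + 77392 * (a ^ (p + 5) * c ^ (q + 2)) - 38005 * (a ^ (p + 3) * c ^ (q + 3))
      + 2764 * (a ^ (p + 1) * c ^ (q + 4)) := by
    unfold g; ring
  rw [hexp]
  simp only [map_add, map_sub, socle_ofNat_mul, socle_a_pow_mul_c_pow]
  split_ifs <;> try omega
  · have hq : q ≤ 3 := by omega
    interval_cases q <;> norm_num [socleCoeff]
  · simp

theorem socle_mul_eq_zero_of_forall {h : ℚ[a,c]} (hh : ∀ p q, socle (a ^ p * c ^ q * h) = 0)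
    (w : ℚ[a,c]) : socle (w * h) = 0 := by
  induction w using MvPolynomial.induction_on' with
  | monomial e r =>
    rw [monomial_eq_C_mul_a_pow_mul_c_pow, mul_assoc, ← smul_eq_C_mul, map_smul, hh, smul_zero]
  | add w₁ w₂ h₁ h₂ => rw [add_mul, map_add, h₁, h₂, add_zero]

noncomputable def rel : Ideal ℚ[a,c] := Ideal.span {f, g}

theorem socle_eq_zero_of_mem {x : ℚ[a,c]} (hx : x ∈ rel) : socle x = 0 := by
  obtain ⟨A, B, rfl⟩ := Ideal.mem_span_pair.mp hx
  rw [map_add, socle_mul_eq_zero_of_forall socle_a_pow_mul_c_pow_mul_f,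
    socle_mul_eq_zero_of_forall socle_a_pow_mul_c_pow_mul_g, add_zero]

def hankel (n : ℕ) : Matrix (Fin n) (Fin n) ℚ := Matrix.of fun k l => socleCoeff (k + l)

theorem det_hankel_ne_zero {n : ℕ} (hn : n ≤ 5) : (hankel n).det ≠ 0 := by
  interval_cases n <;>
    simp only [hankel, Matrix.det_succ_row_zero, Fin.sum_univ_succ, Matrix.submatrix_apply,
      Fin.succAbove_zero, Fin.succ_succAbove_zero, Fin.succ_succAbove_succ, Matrix.det_unique,
      Matrix.of_apply, Fin.val_zero, Fin.val_succ, Fin.sum_univ_zero, Matrix.det_fin_zero,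
      Fin.default_eq_zero] <;>
    norm_num [socleCoeff]

/-- The standard monomials are the `a^i c^j` with `i + 4j ≤ 16`; those of weighted degree
`d = i + 2j` are `a^(d-2k) c^k` for `k < blockSize d`. The dual monomials `a^(16-d-2k) c^k` of
degree `16 - d` pair with them through `socle` by the Hankel matrix `hankel (blockSize d)`. -/
def blockSize (d : ℕ) : ℕ := min (d / 2) ((16 - d) / 2) + 1

theorem blockSize_le_five (d : ℕ) : blockSize d ≤ 5 := by
  unfold blockSize; omega

abbrev StdIndex : Type := Σ d : Fin 17, Fin (blockSize d)

noncomputable def stdMonomial (i : StdIndex) : ℚ[a,c] :=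
  a ^ (i.1 - 2 * i.2 : ℕ) * c ^ (i.2 : ℕ)

noncomputable def dualMonomial (i : StdIndex) : ℚ[a,c] :=
  a ^ (16 - i.1 - 2 * i.2 : ℕ) * c ^ (i.2 : ℕ)

theorem socle_dualMonomial_mul_stdMonomial (i j : StdIndex) :
    socle (dualMonomial j * stdMonomial i) = if i.1 = j.1 then socleCoeff (i.2 + j.2) else 0 := by
  obtain ⟨⟨d, _⟩, k, hk⟩ := i
  obtain ⟨⟨d', _⟩, l, hl⟩ := j
  simp only [blockSize] at hk hl
  rw [dualMonomial, stdMonomial, mul_mul_mul_comm, ← pow_add, ← pow_add, socle_a_pow_mul_c_pow]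
  simp only [Fin.mk.injEq]
  by_cases h : d = d'
  · subst h; rw [if_pos (by omega), if_pos rfl, add_comm]
  · rw [if_neg (by omega), if_neg h]

theorem linearIndependent_mk_stdMonomial :
    LinearIndependent ℚ fun i => Ideal.Quotient.mk rel (stdMonomial i) := by
  rw [Fintype.linearIndependent_iff]
  intro w hw ⟨d, k⟩
  rw [Ideal.Quotient.sum_smul_mk, Ideal.Quotient.eq_zero_iff_mem] at hw
  have hblock : (hankel (blockSize d)).mulVec (fun k => w ⟨d, k⟩) = 0 := by
    ext l
    have h := socle_eq_zero_of_mem (rel.mul_mem_left (dualMonomial ⟨d, l⟩) hw)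
    simp only [Finset.mul_sum, mul_smul_comm, map_sum, map_smul, socle_dualMonomial_mul_stdMonomial,
      Fintype.sum_sigma, smul_eq_mul, mul_ite, mul_zero] at h
    rw [Finset.sum_eq_single d (fun d' _ hd' => Finset.sum_eq_zero fun _ _ => if_neg hd')
      (by simp)] at h
    simpa [Matrix.mulVec, dotProduct, hankel, add_comm, mul_comm] using h
  have hzero := Matrix.eq_zero_of_mulVec_eq_zero (det_hankel_ne_zero (blockSize_le_five d)) hblock
  exact congrFun hzero k

noncomputable def cDegreeLT (n : ℕ) : Submodule ℚ (ℚ[a,c] ⧸ rel) :=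
  Submodule.span ℚ {x | ∃ i j, j < n ∧ Ideal.Quotient.mk rel (a ^ i * c ^ j) = x}

theorem mk_ofNat_mul_mem_cDegreeLT (m : ℕ) [m.AtLeastTwo] {i j n : ℕ}
    (hj : j < n := by norm_num) :
    Ideal.Quotient.mk rel ((no_index (OfNat.ofNat m) : ℚ[a,c]) * (a ^ i * c ^ j)) ∈
      cDegreeLT n := by
  rw [map_mul, map_ofNat, ← map_ofNat (algebraMap ℚ (ℚ[a,c] ⧸ rel)) m, ← Algebra.smul_def]
  exact Submodule.smul_mem _ _ (Submodule.subset_span ⟨i, j, hj, rfl⟩)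

theorem mk_mul_mem_cDegreeLT {n : ℕ} {x : ℚ[a,c] ⧸ rel} (hx : x ∈ cDegreeLT n) (p q : ℕ) :
    Ideal.Quotient.mk rel (a ^ p * c ^ q) * x ∈ cDegreeLT (n + q) := by
  induction hx using Submodule.span_induction with
  | mem x hx =>
    obtain ⟨i, j, hj, rfl⟩ := hx
    rw [← map_mul, show a ^ p * c ^ q * (a ^ i * c ^ j) = a ^ (p + i) * c ^ (j + q) by ring]
    exact Submodule.subset_span ⟨p + i, j + q, by omega, rfl⟩
  | zero => rw [mul_zero]; exact zero_mem _
  | add x y _ _ hx hy => rw [mul_add]; exact add_mem hx hy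
  | smul r x _ hx => rw [mul_smul_comm]; exact Submodule.smul_mem _ r hx

theorem mk_mem_cDegreeLT_of_eq {m : ℚ[a,c]} {n : ℕ} (κ : ℕ) (A B r : ℚ[a,c])
    (hκ : κ ≠ 0) (h : κ * m = A * f + B * g + r) (hr : Ideal.Quotient.mk rel r ∈ cDegreeLT n) :
    Ideal.Quotient.mk rel m ∈ cDegreeLT n := by
  have hmk : Ideal.Quotient.mk rel (κ * m) = Ideal.Quotient.mk rel r :=
    Ideal.Quotient.eq.mpr (Ideal.mem_span_pair.mpr ⟨A, B, by rw [h]; ring⟩)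
  rw [map_mul, map_natCast, ← map_natCast (algebraMap ℚ _), ← Algebra.smul_def] at hmk
  exact (Submodule.smul_mem_iff _ (Nat.cast_ne_zero.mpr hκ)).mp (hmk ▸ hr)

/-- For `j = 5` the exponent `17 - 4 * j` truncates to `0`. The certificates
`κ * m = A * f + B * g + r` come from linear algebra in the weighted degree of `m`. -/
theorem mk_generator_mem_cDegreeLT {j : ℕ} (hj : j ≤ 5) :
    Ideal.Quotient.mk rel (a ^ (17 - 4 * j) * c ^ j) ∈ cDegreeLT j := by
  interval_cases j
  · refine mk_mem_cDegreeLT_of_eq 1097656960720320000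
      (-2422541631177576 * a ^ 7 + 7938261091947809 * a ^ 5 * c - 4126225215886529 * a ^ 3 * c ^ 2
        + 303041794802636 * a * c ^ 3)
      (968395292809596 * a ^ 8 - 11348397562879409 * a ^ 6 * c + 14238029194003139 * a ^ 4 * c ^ 2
        - 2979950403593036 * a ^ 2 * c ^ 3 + 52626650327520 * c ^ 4) 0 (by norm_num)
      (by unfold f g; ring) (by rw [map_zero]; exact zero_mem _)
  · refine mk_mem_cDegreeLT_of_eq 2489746158900
      (252721503 * a ^ 5 - 174280565 * a ^ 3 * c + 13369468 * a * c ^ 2)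
      (-213704163 * a ^ 6 + 553268975 * a ^ 4 * c - 130120828 * a ^ 2 * c ^ 2 + 2321760 * c ^ 3)
      (333559125900 * (a ^ 15 * c ^ 0)) (by norm_num) (by unfold f g; ring)
      (mk_ofNat_mul_mem_cDegreeLT _)
  · refine mk_mem_cDegreeLT_of_eq 6141123450 (-98122 * a ^ 3 + 8983 * a * c)
      (200512 * a ^ 4 - 84133 * a ^ 2 * c + 1560 * c ^ 2)
      (4386516750 * (a ^ 11 * c ^ 1) - 358003800 * (a ^ 13 * c ^ 0)) (by norm_num)
      (by unfold f g; ring) ?_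
    rw [map_sub]
    repeat' first | apply add_mem | apply sub_mem | exact mk_ofNat_mul_mem_cDegreeLT _
  · refine mk_mem_cDegreeLT_of_eq 113185800 (691 * a) (-5161 * a ^ 2 + 120 * c)
      (9809100 * (a ^ 11 * c ^ 0) - 146566350 * (a ^ 9 * c ^ 1) + 319967550 * (a ^ 7 * c ^ 2))
      (by norm_num) (by unfold f g; ring) ?_
    simp only [map_add, map_sub]
    repeat' first | apply add_mem | apply sub_mem | exact mk_ofNat_mul_mem_cDegreeLT _
  · refine mk_mem_cDegreeLT_of_eq 2764 0 1
      (31095 * (a ^ 7 * c ^ 1) - 1944 * (a ^ 9 * c ^ 0) - 77392 * (a ^ 5 * c ^ 2)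
        + 38005 * (a ^ 3 * c ^ 3)) (by norm_num) (by unfold g; ring) ?_
    simp only [map_add, map_sub]
    repeat' first | apply add_mem | apply sub_mem | exact mk_ofNat_mul_mem_cDegreeLT _
  · refine mk_mem_cDegreeLT_of_eq 480 (-1) 0
      (324 * (a ^ 10 * c ^ 0) - 20475 * (a ^ 8 * c ^ 1) + 120382 * (a ^ 6 * c ^ 2)
        - 133495 * (a ^ 4 * c ^ 3) + 27244 * (a ^ 2 * c ^ 4)) (by norm_num) (by unfold f; ring) ?_
    simp only [map_add, map_sub]
    repeat' first | apply add_mem | apply sub_mem | exact mk_ofNat_mul_mem_cDegreeLT _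

theorem mk_a_pow_mul_c_pow_mem_span_stdMonomial (j : ℕ) :
    ∀ i, Ideal.Quotient.mk rel (a ^ i * c ^ j) ∈
      Submodule.span ℚ (Set.range fun k => Ideal.Quotient.mk rel (stdMonomial k)) := by
  induction j using Nat.strong_induction_on with
  | _ j ih =>
  intro i
  by_cases hstd : i + 4 * j ≤ 16
  · refine Submodule.subset_span
      ⟨⟨⟨i + 2 * j, by omega⟩, ⟨j, by simp only [blockSize]; omega⟩⟩, ?_⟩
    simp only [stdMonomial, Nat.add_sub_cancel]
  · have hlower : cDegreeLT j ≤
        Submodule.span ℚ (Set.range fun k => Ideal.Quotient.mk rel (stdMonomial k)) :=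
      Submodule.span_le.mpr fun _ ⟨i', j', hj', hx⟩ => hx ▸ ih j' hj' i'
    have hsplit : a ^ i * c ^ j = a ^ (i - (17 - 4 * min j 5)) * c ^ (j - min j 5) *
        (a ^ (17 - 4 * min j 5) * c ^ min j 5) := by
      rw [mul_mul_mul_comm, ← pow_add, ← pow_add, Nat.sub_add_cancel (by omega),
        Nat.sub_add_cancel (min_le_left j 5)]
    have hmem := mk_mul_mem_cDegreeLT (mk_generator_mem_cDegreeLT (min_le_right j 5))
      (i - (17 - 4 * min j 5)) (j - min j 5)
    rw [← map_mul, ← hsplit, Nat.add_sub_cancel' (min_le_left j 5)] at hmem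
    exact hlower hmem

theorem span_stdMonomial_eq_top :
    ⊤ ≤ Submodule.span ℚ (Set.range fun k => Ideal.Quotient.mk rel (stdMonomial k)) := by
  rintro x -
  obtain ⟨p, rfl⟩ := Ideal.Quotient.mk_surjective x
  induction p using MvPolynomial.induction_on' with
  | monomial e r =>
    rw [monomial_eq_C_mul_a_pow_mul_c_pow, ← smul_eq_C_mul, ← Ideal.Quotient.mkₐ_eq_mk ℚ,
      map_smul]
    exact Submodule.smul_mem _ r (mk_a_pow_mul_c_pow_mem_span_stdMonomial _ _)
  | add p q hp hq => rw [map_add]; exact add_mem hp hq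

theorem finrank_quotient_rel : Module.finrank ℚ (ℚ[a,c] ⧸ rel) = 45 := by
  rw [Module.finrank_eq_card_basis
    (Module.Basis.mk linearIndependent_mk_stdMonomial span_stdMonomial_eq_top)]
  rfl

theorem span_eq_rel : Ideal.span {36864 * f, 73728 * g} = rel := by
  have hunit (n : ℕ) [n.AtLeastTwo] : IsUnit (OfNat.ofNat n : ℚ[a,c]) := by
    rw [← map_ofNat (algebraMap ℚ ℚ[a,c]) n]
    exact (IsUnit.mk0 _ (by norm_num)).map _
  exact span_pair_unit_mul (hunit _) (hunit _) f g

end EllipticChow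

/-- If the image of the product `P₂` in `R = ℚ[a,c][z]/(z² + c)` equals `q₀ + q₁·z` with
`q₀, q₁ ∈ ℚ[a,c]`, then `ℚ[a,c]/(q₀, q₁)` is a 45-dimensional `ℚ`-vector space. -/
theorem stmt_4 (q₀ q₁ : MvPolynomial (Fin 2) ℚ)
    (h : Ideal.Quotient.mk Irel (prodP 2) =
      Ideal.Quotient.mk Irel (Polynomial.C q₀ + Polynomial.C q₁ * Polynomial.X)) :
    Module.finrank ℚ (MvPolynomial (Fin 2) ℚ ⧸ Ideal.span {q₀, q₁}) = 45 := by
  obtain ⟨rfl, rfl⟩ := mk_linear_eq_mk_linear_iff.mp (h.symm.trans EllipticChow.mk_prodP_two)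
  rw [EllipticChow.span_eq_rel]
  exact EllipticChow.finrank_quotient_rel
end

section
/- Define p₁, p₂ ∈ ℚ[a, c] by substituting N = 2 into the polynomials p₁ = (1620N−1296)a⁹ + (−19440N³+46656N²−35244N+8289)a⁷c + (40824N⁵−163296N⁴+246708N³−174069N²+56478N−6584)a⁵c² + (−19440N⁷+108864N⁶−246708N⁵+290115N⁴−188260N³+65840N²−11038N+631)a³c³ + (1620N⁹−11664N⁸+35244N⁷−58023N⁶+56478N⁵−32920N⁴+11038N³−1893N²+120N)ac⁴ and p₂ = 324a¹⁰ + (−14580N²+23328N−8811)a⁸c + (68040N⁴−217728N³+246708N²−116046N+18826)a⁶c² + (−68040N⁶+326592N⁵−616770N⁴+580230N³−282390N²+65840N−5519)a⁴c³ + (14580N⁸−93312N⁷+246708N⁶−348138N⁵+282390N⁴−131680N³+33114N²−3786N+120)a²c⁴ + (−324N¹⁰+2592N⁹−8811N⁸+16578N⁷−18826N⁶+13168N⁵−5519N⁴+1262N³−120N²)c⁵. Then in the graded ring ℚ[a, c]/(p₁, p₂) with deg a = 1 and deg c = 2, every homogeneous element of degree ≥ 17 is zero. -/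
open MvPolynomial

noncomputable section

/-- The grading weights: `deg a = 1`, `deg c = 2`. -/
def w : Fin 2 → ℕ := ![1, 2]

/-- The first relation polynomial `p₁(N, a, c)`. -/
def p1 (N : ℚ) : MvPolynomial (Fin 2) ℚ :=
  C (1620*N - 1296) * a^9
  + C (-19440*N^3 + 46656*N^2 - 35244*N + 8289) * a^7 * c
  + C (40824*N^5 - 163296*N^4 + 246708*N^3 - 174069*N^2 + 56478*N - 6584) * a^5 * c^2
  + C (-19440*N^7 + 108864*N^6 - 246708*N^5 + 290115*N^4 - 188260*N^3 + 65840*N^2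
      - 11038*N + 631) * a^3 * c^3
  + C (1620*N^9 - 11664*N^8 + 35244*N^7 - 58023*N^6 + 56478*N^5 - 32920*N^4
      + 11038*N^3 - 1893*N^2 + 120*N) * a * c^4

/-- The second relation polynomial `p₂(N, a, c)`. -/
def p2 (N : ℚ) : MvPolynomial (Fin 2) ℚ :=
  C 324 * a^10
  + C (-14580*N^2 + 23328*N - 8811) * a^8 * c
  + C (68040*N^4 - 217728*N^3 + 246708*N^2 - 116046*N + 18826) * a^6 * c^2
  + C (-68040*N^6 + 326592*N^5 - 616770*N^4 + 580230*N^3 - 282390*N^2 + 65840*N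
      - 5519) * a^4 * c^3
  + C (14580*N^8 - 93312*N^7 + 246708*N^6 - 348138*N^5 + 282390*N^4 - 131680*N^3
      + 33114*N^2 - 3786*N + 120) * a^2 * c^4
  + C (-324*N^10 + 2592*N^9 - 8811*N^8 + 16578*N^7 - 18826*N^6 + 13168*N^5
      - 5519*N^4 + 1262*N^3 - 120*N^2) * c^5

/-- The degree `i` graded piece of the quotient of `ℚ[a,c]` (weighted grading) by `I`. -/
def piece (I : Ideal (MvPolynomial (Fin 2) ℚ)) (i : ℕ) :
    Submodule ℚ (MvPolynomial (Fin 2) ℚ ⧸ I) :=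
  Submodule.map (Ideal.Quotient.mkₐ ℚ I).toLinearMap
    (weightedHomogeneousSubmodule ℚ w i)

end

noncomputable section Aux

lemma p1_two : p1 2 = 1944 * a^9 - 31095 * a^7 * c + 77392 * a^5 * c^2
    - 38005 * a^3 * c^3 + 2764 * a * c^4 := by
  unfold p1
  norm_num [map_ofNat]
  ring

lemma p2_two : p2 2 = 324 * a^10 - 20475 * a^8 * c + 120382 * a^6 * c^2
    - 133495 * a^4 * c^3 + 27244 * a^2 * c^4 - 480 * c^5 := by
  unfold p2
  norm_num [map_ofNat]
  ring

lemma scale_mem {I : Ideal (MvPolynomial (Fin 2) ℚ)} (D : ℚ) (hD : D ≠ 0)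
    {f g : MvPolynomial (Fin 2) ℚ} (hg : g ∈ I) (h : C D * f = g) : f ∈ I := by
  have hf : f = C D⁻¹ * (C D * f) := by
    rw [← mul_assoc, ← C_mul, inv_mul_cancel₀ hD, C_1, one_mul]
  rw [hf, h]
  exact I.mul_mem_left _ hg

lemma mem_17_0 : a^17 ∈ Ideal.span {p1 2, p2 2} := by
  apply scale_mem (1097656960720320000 : ℚ) (by norm_num)
    (g := ((968395292809596) * a^8 + (-11348397562879409) * a^6 * c + (14238029194003139) * a^4 * c^2 + (-2979950403593036) * a^2 * c^3 + (52626650327520) * c^4) * p1 2 + ((-2422541631177576) * a^7 + (7938261091947809) * a^5 * c + (-4126225215886529) * a^3 * c^2 + (303041794802636) * a * c^3) * p2 2)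
  · exact Ideal.add_mem _ (Ideal.mul_mem_left _ _ (Ideal.subset_span (by simp)))
      (Ideal.mul_mem_left _ _ (Ideal.subset_span (by simp)))
  · simp only [p1_two, p2_two, map_ofNat]
    ring

lemma mem_15_1 : a^15 * c ∈ Ideal.span {p1 2, p2 2} := by
  apply scale_mem (121961884524480000 : ℚ) (by norm_num)
    (g := ((3946998774564) * a^8 + (-141828917802631) * a^6 * c + (205571895728101) * a^4 * c^2 + (-44245526007124) * a^2 * c^3 + (783395323680) * c^4) * p1 2 + ((-23681992647384) * a^7 + (109630951150231) * a^5 * c + (-60767684725111) * a^3 * c^2 + (4511051405524) * a * c^3) * p2 2)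
  · exact Ideal.add_mem _ (Ideal.mul_mem_left _ _ (Ideal.subset_span (by simp)))
      (Ideal.mul_mem_left _ _ (Ideal.subset_span (by simp)))
  · simp only [p1_two, p2_two, map_ofNat]
    ring

lemma mem_13_2 : a^13 * c^2 ∈ Ideal.span {p1 2, p2 2} := by
  apply scale_mem (13551320502720000 : ℚ) (by norm_num)
    (g := ((58754649276) * a^8 + (-3274412000129) * a^6 * c + (6071485025459) * a^4 * c^2 + (-1366863144716) * a^2 * c^3 + (24298545120) * c^4) * p1 2 + ((-352527895656) * a^7 + (3007481740529) * a^5 * c + (-1853165356049) * a^3 * c^2 + (139919122316) * a * c^3) * p2 2)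
  · exact Ideal.add_mem _ (Ideal.mul_mem_left _ _ (Ideal.subset_span (by simp)))
      (Ideal.mul_mem_left _ _ (Ideal.subset_span (by simp)))
  · simp only [p1_two, p2_two, map_ofNat]
    ring

lemma mem_11_3 : a^11 * c^3 ∈ Ideal.span {p1 2, p2 2} := by
  apply scale_mem (4517106834240000 : ℚ) (by norm_num)
    (g := ((5467172652) * a^8 + (-325910055333) * a^6 * c + (939853957343) * a^4 * c^2 + (-228764908732) * a^2 * c^3 + (4093926240) * c^4) * p1 2 + ((-32803035912) * a^7 + (407187410133) * a^5 * c + (-303417894773) * a^3 * c^2 + (23574191932) * a * c^3) * p2 2)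
  · exact Ideal.add_mem _ (Ideal.mul_mem_left _ _ (Ideal.subset_span (by simp)))
      (Ideal.mul_mem_left _ _ (Ideal.subset_span (by simp)))
  · simp only [p1_two, p2_two, map_ofNat]
    ring

lemma mem_9_4 : a^9 * c^4 ∈ Ideal.span {p1 2, p2 2} := by
  apply scale_mem (4517106834240000 : ℚ) (by norm_num)
    (g := ((2763400212) * a^8 + (-169164368523) * a^6 * c + (700829587633) * a^4 * c^2 + (-198726633092) * a^2 * c^3 + (3599521440) * c^4) * p1 2 + ((-16580401272) * a^7 + (232406623323) * a^5 * c + (-252889963963) * a^3 * c^2 + (20727244292) * a * c^3) * p2 2)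
  · exact Ideal.add_mem _ (Ideal.mul_mem_left _ _ (Ideal.subset_span (by simp)))
      (Ideal.mul_mem_left _ _ (Ideal.subset_span (by simp)))
  · simp only [p1_two, p2_two, map_ofNat]
    ring

lemma mem_7_5 : a^7 * c^5 ∈ Ideal.span {p1 2, p2 2} := by
  apply scale_mem (4517106834240000 : ℚ) (by norm_num)
    (g := ((2429676972) * a^8 + (-150778686213) * a^6 * c + (733580610623) * a^4 * c^2 + (-300249817852) * a^2 * c^3 + (5576204640) * c^4) * p1 2 + ((-14578061832) * a^7 + (216601097013) * a^5 * c + (-347956216853) * a^3 * c^2 + (32109645052) * a * c^3) * p2 2)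
  · exact Ideal.add_mem _ (Ideal.mul_mem_left _ _ (Ideal.subset_span (by simp)))
      (Ideal.mul_mem_left _ _ (Ideal.subset_span (by simp)))
  · simp only [p1_two, p2_two, map_ofNat]
    ring

lemma mem_5_6 : a^5 * c^6 ∈ Ideal.span {p1 2, p2 2} := by
  apply scale_mem (4517106834240000 : ℚ) (by norm_num)
    (g := ((3763938132) * a^8 + (-235430302203) * a^6 * c + (1247710203313) * a^4 * c^2 + (-817243219412) * a^2 * c^3 + (16246263840) * c^4) * p1 2 + ((-22583628792) * a^7 + (346655445003) * a^5 * c + (-682468964443) * a^3 * c^2 + (93551402612) * a * c^3) * p2 2)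
  · exact Ideal.add_mem _ (Ideal.mul_mem_left _ _ (Ideal.subset_span (by simp)))
      (Ideal.mul_mem_left _ _ (Ideal.subset_span (by simp)))
  · simp only [p1_two, p2_two, map_ofNat]
    ring

lemma mem_3_7 : a^3 * c^7 ∈ Ideal.span {p1 2, p2 2} := by
  apply scale_mem (4517106834240000 : ℚ) (by norm_num)
    (g := ((10966228092) * a^8 + (-689240753793) * a^6 * c + (3839064976103) * a^4 * c^2 + (-3270612695272) * a^2 * c^3 + (104867639040) * c^4) * p1 2 + ((-65797368552) * a^7 + (1029869650593) * a^5 * c + (-2272783828133) * a^3 * c^2 + (603862821472) * a * c^3) * p2 2)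
  · exact Ideal.add_mem _ (Ideal.mul_mem_left _ _ (Ideal.subset_span (by simp)))
      (Ideal.mul_mem_left _ _ (Ideal.subset_span (by simp)))
  · simp only [p1_two, p2_two, map_ofNat]
    ring

lemma mem_1_8 : a * c^8 ∈ Ideal.span {p1 2, p2 2} := by
  apply scale_mem (4517106834240000 : ℚ) (by norm_num)
    (g := ((70785656352) * a^8 + (-4462293999708) * a^6 * c + (25611126168943) * a^4 * c^2 + (-25326154760657) * a^2 * c^3 + (2681499717240) * c^4) * p1 2 + ((-424713938112) * a^7 + (6727659373008) * a^5 * c + (-15878289350623) * a^3 * c^2 + (6030329967107) * a * c^3) * p2 2)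
  · exact Ideal.add_mem _ (Ideal.mul_mem_left _ _ (Ideal.subset_span (by simp)))
      (Ideal.mul_mem_left _ _ (Ideal.subset_span (by simp)))
  · simp only [p1_two, p2_two, map_ofNat]
    ring

lemma mem_0_9 : c^9 ∈ Ideal.span {p1 2, p2 2} := by
  apply scale_mem (18068427336960000 : ℚ) (by norm_num)
    (g := ((7240049236548) * a^9 + (-457247746628667) * a^7 * c + (2672186648674382) * a^5 * c^2 + (-2880612201598843) * a^3 * c^3 + (507485200094760) * a * c^4) * p1 2 + ((-43440295419288) * a^8 + (693144758477367) * a^6 * c + (-1702477913479952) * a^4 * c^2 + (785740148878393) * a^2 * c^3 + (-37642556952000) * c^4) * p2 2)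
  · exact Ideal.add_mem _ (Ideal.mul_mem_left _ _ (Ideal.subset_span (by simp)))
      (Ideal.mul_mem_left _ _ (Ideal.subset_span (by simp)))
  · simp only [p1_two, p2_two, map_ofNat]
    ring

lemma pow_mem_span : ∀ n j k : ℕ, j + 2*k = n → 17 ≤ n →
    a^j * c^k ∈ Ideal.span {p1 2, p2 2} := by
  intro n
  induction n using Nat.strong_induction_on with
  | _ n ih =>
    intro j k hjk hn
    rcases Nat.eq_zero_or_pos j with rfl | hj
    · have hk : 9 ≤ k := by omega
      rcases eq_or_lt_of_le hk with rfl | hk10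
      · simpa using mem_0_9
      · have hc : a^0 * c^k = c * (a^0 * c^(k-1)) := by
          rw [pow_zero, one_mul, one_mul, ← pow_succ']
          congr 1; omega
        rw [hc]
        exact Ideal.mul_mem_left _ _ (ih (n-2) (by omega) 0 (k-1) (by omega) (by omega))
    · by_cases h18 : 18 ≤ n
      · have ha : a^j * c^k = a * (a^(j-1) * c^k) := by
          rw [← mul_assoc, ← pow_succ']
          congr 2; omega
        rw [ha]
        exact Ideal.mul_mem_left _ _ (ih (n-1) (by omega) (j-1) k (by omega) (by omega))
      · have h17 : n = 17 := by omega
        subst h17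
        have hk : k ≤ 8 := by omega
        interval_cases k
        · obtain rfl : j = 17 := by omega
          simpa using mem_17_0
        · obtain rfl : j = 15 := by omega
          simpa using mem_15_1
        · obtain rfl : j = 13 := by omega
          simpa using mem_13_2
        · obtain rfl : j = 11 := by omega
          simpa using mem_11_3
        · obtain rfl : j = 9 := by omega
          simpa using mem_9_4
        · obtain rfl : j = 7 := by omega
          simpa using mem_7_5
        · obtain rfl : j = 5 := by omega
          simpa using mem_5_6
        · obtain rfl : j = 3 := by omega
          simpa using mem_3_7
        · obtain rfl : j = 1 := by omega
          simpa using mem_1_8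

end Aux

/-- In `ℚ[a,c]/(p₁(2), p₂(2))` every homogeneous element of weighted degree ≥ 17 is zero. -/
theorem stmt_5 (i : ℕ) (hi : 17 ≤ i)
    (x : MvPolynomial (Fin 2) ℚ) (hx : x ∈ weightedHomogeneousSubmodule ℚ w i) :
    Ideal.Quotient.mk (Ideal.span {p1 2, p2 2}) x = 0 := by
  rw [Ideal.Quotient.eq_zero_iff_mem]
  have hx' : IsWeightedHomogeneous w x i := hx
  rw [x.as_sum]
  apply Ideal.sum_mem
  intro s hs
  have hdeg : Finsupp.weight w s = i := hx' (mem_support_iff.mp hs)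
  have hw2 : s 0 + 2 * s 1 = i := by
    rw [Finsupp.weight_apply, Finsupp.sum_fintype _ _ (by simp)] at hdeg
    rw [Fin.sum_univ_two] at hdeg
    simpa [w, mul_comm] using hdeg
  have hmono : monomial s (coeff s x) = C (coeff s x) * (a ^ s 0 * c ^ s 1) := by
    rw [monomial_eq]
    congr 1
    rw [Finsupp.prod_fintype _ _ (by simp)]
    exact Fin.prod_univ_two _
  rw [hmono]
  exact Ideal.mul_mem_left _ _ (pow_mem_span i (s 0) (s 1) hw2 hi)
end
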